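/- Let q be an even natural number, let a be an integer with 3 ≤ a ≤ q/2 + 1, and set m_a = (q+1)² − a. Then the pseudoachromatic index of the complete graph K_{m_a} satisfies ψ(m_a) ≤ ⌊(m_a(m_a−1)/2)/(q/2 + 1)⌋. -/

import Mathlib

/-- A complete edge-colouring of the complete graph `K_m` with `k` colours:
every colour appears on some edge, and every two distinct colours appear
on two edges sharing a common vertex. -/
def IsCompleteEdgeColouring {m k : ℕ} (Γ : Sym2 (Fin m) → Fin k) : Prop :=
  (∀ c : Fin k, ∃ x y : Fin m, x ≠ y ∧ Γ s(x, y) = c) ∧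
  (∀ c₁ c₂ : Fin k, c₁ ≠ c₂ →
    ∃ x y z : Fin m, x ≠ y ∧ x ≠ z ∧ Γ s(x, y) = c₁ ∧ Γ s(x, z) = c₂)

/-- The pseudoachromatic index of the complete graph `K_m`: the largest number of
colours in a complete edge-colouring of `K_m`. -/
noncomputable def pseudoachromaticIndex (m : ℕ) : ℕ :=
  sSup {k : ℕ | ∃ Γ : Sym2 (Fin m) → Fin k, IsCompleteEdgeColouring Γ}

/-!
Let `h = q / 2`. If every colour class has more than `h` edges, the bound is pigeonhole. Otherwise
some class has `e ≤ h` edges, covering a set `S` of at most `2e` vertices. Completeness forces every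
other colour onto an edge meeting `S`, so at least `e + (k - 1)` edges meet `S`, while
`C(m - 2e, 2)` edges avoid it. Hence `k ≤ 2e(m - e - 1) + 1 ≤ 2h(m - h - 1) + 1`, and for
`m = (2h + 1)² - a` with `3 ≤ a ≤ h + 1` this is at most `C(m, 2) / (h + 1)`.
-/

open Finset

section EdgeCounting

variable {V : Type*} [DecidableEq V]

theorem card_biUnion_toFinset_le (E : Finset (Sym2 V)) : #(E.biUnion Sym2.toFinset) ≤ 2 * #E := by
  refine card_biUnion_le.trans ?_
  rw [mul_comm, ← smul_eq_mul, ← sum_const]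
  refine sum_le_sum fun z _ => ?_
  rw [Sym2.card_toFinset]
  split_ifs <;> simp

variable [Fintype V]

theorem card_filter_not_isDiag : #{z : Sym2 V | ¬ z.IsDiag} = (Fintype.card V).choose 2 := by
  rw [← Fintype.card_subtype, Sym2.card_subtype_not_diag]

def edgesMeeting (S : Finset V) : Finset (Sym2 V) := {z | ¬ z.IsDiag ∧ ∃ v ∈ S, v ∈ z}

theorem card_edgesMeeting_add_choose_two_le (S : Finset V) :
    #(edgesMeeting S) + (Fintype.card V - #S).choose 2 ≤
      (Fintype.card V).choose 2 := by
  rw [← card_compl, ← Sym2.card_image_offDiag, ← card_filter_not_isDiag,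
    ← card_union_of_disjoint]
  · refine card_le_card (union_subset (fun z hz => ?_) ?_)
    · simp_all [edgesMeeting]
    · rintro _ hz
      obtain ⟨⟨x, y⟩, hxy, rfl⟩ := mem_image.mp hz
      simpa using (mem_offDiag.mp hxy).2.2
  · rw [disjoint_left]
    rintro _ hz hz'
    obtain ⟨⟨x, y⟩, hxy, rfl⟩ := mem_image.mp hz'
    simp only [mem_offDiag, mem_compl] at hxy
    simp only [edgesMeeting, mem_filter, mem_univ, true_and, Function.uncurry_apply_pair,
      Sym2.mem_iff] at hz
    obtain ⟨_, v, hv, rfl | rfl⟩ := hz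
    exacts [hxy.1 hv, hxy.2.1 hv]

end EdgeCounting

section Colouring

variable {m k : ℕ} (Γ : Sym2 (Fin m) → Fin k)

def colourClass (c : Fin k) : Finset (Sym2 (Fin m)) := {z | ¬ z.IsDiag ∧ Γ z = c}

theorem mul_le_choose_two_of_le_card_colourClass {h : ℕ}
    (hΓ : ∀ c, h ≤ #(colourClass Γ c)) : k * h ≤ m.choose 2 := by
  calc k * h = ∑ _c : Fin k, h := by simp
    _ ≤ ∑ c, #(colourClass Γ c) := sum_le_sum fun c _ => hΓ c
    _ = #{z : Sym2 (Fin m) | ¬ z.IsDiag} := by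
      rw [card_eq_sum_card_fiberwise (f := Γ) (t := univ) (fun _ _ => mem_univ _)]
      simp only [colourClass, filter_filter]
    _ = m.choose 2 := by rw [card_filter_not_isDiag, Fintype.card_fin]

variable {Γ}

theorem IsCompleteEdgeColouring.card_colourClass_add_le (hΓ : IsCompleteEdgeColouring Γ)
    (c : Fin k) :
    #(colourClass Γ c) + k + (m - 2 * #(colourClass Γ c)).choose 2 ≤ m.choose 2 + 1 := by
  set C := colourClass Γ c
  set S := C.biUnion Sym2.toFinset
  set F := edgesMeeting S
  have mem_S {x y : Fin m} (hxy : x ≠ y) (hc : Γ s(x, y) = c) : x ∈ S :=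
    mem_biUnion.mpr ⟨s(x, y), by simpa [C, colourClass] using ⟨hxy, hc⟩, by simp⟩
  have hCF : C ⊆ F := by
    intro z hz
    induction z with | _ x y => ?_
    simp only [C, colourClass, mem_filter, mem_univ, true_and, Sym2.mk_isDiag_iff] at hz
    simpa [F, edgesMeeting] using ⟨hz.1, x, mem_S hz.1 hz.2, Or.inl rfl⟩
  have hsurj : Set.SurjOn Γ ↑(F \ C) ↑(univ.erase c) := by
    intro c' hc'
    obtain ⟨x, y, z, hxy, hxz, hc, hxzc'⟩ := hΓ.2 c c' (ne_of_mem_erase hc').symm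
    refine ⟨s(x, z), ?_, hxzc'⟩
    simpa [F, edgesMeeting, C, colourClass, hxz, hxzc'] using
      ⟨⟨x, mem_S hxy hc, Or.inl rfl⟩, ne_of_mem_erase hc'⟩
  have hk : k ≤ #(F \ C) + 1 := by
    have := card_le_card_of_surjOn Γ hsurj
    rw [card_erase_of_mem (mem_univ c), card_univ, Fintype.card_fin] at this
    omega
  have hF : #F + (m - #S).choose 2 ≤ m.choose 2 := by
    simpa only [Fintype.card_fin] using card_edgesMeeting_add_choose_two_le S
  have hS : (m - 2 * #C).choose 2 ≤ (m - #S).choose 2 :=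
    Nat.choose_le_choose _ (Nat.sub_le_sub_left (card_biUnion_toFinset_le C) m)
  have := card_sdiff_add_card_eq_card hCF
  omega

theorem le_two_mul_mul_sub_add_one {m e h k : ℕ} (heh : e ≤ h) (hm : 2 * h + 1 ≤ m)
    (H : e + k + (m - 2 * e).choose 2 ≤ m.choose 2 + 1) : k ≤ 2 * h * (m - h - 1) + 1 := by
  qify [show h ≤ m by omega, show 1 ≤ m - h by omega]
  qify at H
  rw [Nat.cast_choose_two, Nat.cast_choose_two, Nat.cast_sub (by omega)] at H
  push_cast at H
  have he : (e : ℚ) ≤ h := by exact_mod_cast heh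
  have hm' : (2 * h + 1 : ℚ) ≤ m := by exact_mod_cast hm
  -- `H` says `k ≤ 2e(m - e - 1) + 1`, and `2e(m - e - 1)` increases with `e` while `e + h < m`.
  nlinarith [mul_nonneg (sub_nonneg.mpr he) (show (0 : ℚ) ≤ m - h - e - 1 by linarith)]

theorem two_mul_add_one_le_sq_sub {a h : ℕ} (hh : 1 ≤ h) (ha : a ≤ h + 1) :
    2 * h + 1 ≤ (2 * h + 1) ^ 2 - a :=
  Nat.le_sub_of_add_le (by nlinarith)

theorem succ_mul_le_choose_two {a h m : ℕ} (ha1 : 3 ≤ a) (ha2 : a ≤ h + 1)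
    (hm : m = (2 * h + 1) ^ 2 - a) : (2 * h * (m - h - 1) + 1) * (h + 1) ≤ m.choose 2 := by
  have hhm := hm ▸ two_mul_add_one_le_sq_sub (by omega) ha2
  have hm' : (m : ℚ) = (2 * h + 1) ^ 2 - a := by
    rw [hm, Nat.cast_sub (by omega)]; push_cast; ring
  qify [show h ≤ m by omega, show 1 ≤ m - h by omega]
  rw [Nat.cast_choose_two, hm']
  have ha1' : (3 : ℚ) ≤ a := by exact_mod_cast ha1
  have ha2' : (a : ℚ) ≤ h + 1 := by exact_mod_cast ha2
  -- `m(m - 1) - 2(h + 1)(2h(m - h - 1) + 1) = (h + 1 - a) m + (h + 1)(a - 3)`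
  nlinarith [mul_nonneg (sub_nonneg.mpr ha2') (hm' ▸ (Nat.cast_nonneg m : (0 : ℚ) ≤ m)),
    mul_nonneg (show (0 : ℚ) ≤ h + 1 by positivity) (sub_nonneg.mpr ha1')]

theorem IsCompleteEdgeColouring.mul_succ_le_choose_two (hΓ : IsCompleteEdgeColouring Γ)
    {a h : ℕ} (ha1 : 3 ≤ a) (ha2 : a ≤ h + 1) (hm : m = (2 * h + 1) ^ 2 - a) :
    k * (h + 1) ≤ m.choose 2 := by
  by_cases hlarge : ∀ c, h + 1 ≤ #(colourClass Γ c)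
  · exact mul_le_choose_two_of_le_card_colourClass Γ hlarge
  push Not at hlarge
  obtain ⟨c, hc⟩ := hlarge
  calc k * (h + 1) ≤ (2 * h * (m - h - 1) + 1) * (h + 1) :=
        Nat.mul_le_mul_right _ <| le_two_mul_mul_sub_add_one (by omega)
          (hm ▸ two_mul_add_one_le_sq_sub (by omega) ha2) (hΓ.card_colourClass_add_le c)
    _ ≤ m.choose 2 := succ_mul_le_choose_two ha1 ha2 hm

end Colouring

theorem stmt_6 (q a : ℕ) (hq : Even q) (ha1 : 3 ≤ a) (ha2 : a ≤ q / 2 + 1)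
    (m : ℕ) (hm : m = (q + 1) ^ 2 - a) :
    pseudoachromaticIndex m ≤ (m * (m - 1) / 2) / (q / 2 + 1) := by
  obtain ⟨h, rfl⟩ := hq
  rw [show (h + h) / 2 = h by omega] at ha2 ⊢
  refine csSup_le' ?_
  rintro k ⟨Γ, hΓ⟩
  rw [Nat.le_div_iff_mul_le h.succ_pos, ← Nat.choose_two_right]
  exact hΓ.mul_succ_le_choose_two ha1 ha2 (by rw [hm, two_mul])
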